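/- For all β ≥ 1, L > 0 and x ≥ 0, the inequalities 12β·H_{β,L}(x) ≥ φ_{β,L}(x)² and 4β·H_{β,L}(x) ≥ x·G_{β,L}(x) hold. -/

import Mathlib

/-- Linearized power function: `x ^ β` for `x ≤ L`, linear extension beyond `L`. -/
noncomputable def phi (β L x : ℝ) : ℝ :=
  if x ≤ L then x ^ β else β * L ^ (β-1) * (x - L) + L ^ β

/-- `G_{β,L}(x) = ∫₀ˣ φ'(y)² dy`, in closed form. -/
noncomputable def Gfun (β L x : ℝ) : ℝ :=
  if x ≤ L then β^2/(2*β-1) * x ^ (2*β-1)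
  else β^2 * L ^ (2*(β-1)) * x - 2*β^2 * L ^ (2*β-1) * (β-1)/(2*β-1)

/-- `H_{β,L}(x) = ∫₀ˣ G_{β,L}(y) dy`. -/
noncomputable def Hfun (β L x : ℝ) : ℝ := ∫ y in (0:ℝ)..x, Gfun β L y

/-!
On `[0, L]` all three quantities are multiples of `(x ^ β) ^ 2`. Beyond `L`, writing
`x = L (1 + s)`, one has `φ = L^β (1 + β s)`, `x G = c L^{2β} (1 + s)(1 + (2β - 1) s)` and
`H = c L^{2β} (1/(2β) + s + (2β - 1) s² / 2)` with `c = β² / (2β - 1)`; the case `x ≤ L` is the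
instance `s = 0` with `L^β` replaced by `x^β`. Both inequalities thus reduce to comparing
polynomials in `s ≥ 0`, which holds coefficientwise as soon as `β > 1/2`.
-/

namespace Real

lemma rpow_two_mul_eq_sq {x : ℝ} (hx : 0 ≤ x) (β : ℝ) : x ^ (2 * β) = (x ^ β) ^ 2 := by
  rw [mul_comm, rpow_mul hx, rpow_two]

lemma rpow_two_mul_sub_one {x : ℝ} (hx : 0 < x) (β : ℝ) : x ^ (2 * β - 1) = (x ^ β) ^ 2 / x := by
  rw [rpow_sub_one hx.ne', rpow_two_mul_eq_sq hx.le]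

lemma rpow_two_mul_sub_two {x : ℝ} (hx : 0 < x) (β : ℝ) :
    x ^ (2 * (β - 1)) = (x ^ β) ^ 2 / x ^ 2 := by
  rw [show 2 * (β - 1) = 2 * β - 2 by ring, rpow_sub hx, rpow_two_mul_eq_sq hx.le, rpow_two]

end Real

section
variable {β L : ℝ}

lemma Gfun_of_ge (hβ : 1 / 2 < β) (hL : 0 < L) {y : ℝ} (hy : L ≤ y) :
    Gfun β L y =
      β ^ 2 / (2 * β - 1) * (L ^ β) ^ 2 / L ^ 2 * ((2 * β - 1) * y - 2 * (β - 1) * L) := by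
  have : β * 2 - 1 ≠ 0 := by linarith
  rcases hy.eq_or_lt with rfl | hy
  · rw [Gfun, if_pos le_rfl, Real.rpow_two_mul_sub_one hL]
    field_simp
    ring
  · rw [Gfun, if_neg hy.not_ge, Real.rpow_two_mul_sub_one hL, Real.rpow_two_mul_sub_two hL]
    field_simp

lemma continuous_Gfun (hβ : 1 / 2 < β) (hL : 0 < L) : Continuous (Gfun β L) := by
  have hpow : Continuous fun y : ℝ => y ^ (2 * β - 1) :=
    continuous_iff_continuousAt.mpr fun y =>
      Real.continuousAt_rpow_const y _ (Or.inr (by linarith))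
  refine Continuous.if_le (continuous_const.mul hpow) (by fun_prop) continuous_id
    continuous_const ?_
  rintro y rfl
  have : β * 2 - 1 ≠ 0 := by linarith
  rw [Real.rpow_two_mul_sub_one hL, Real.rpow_two_mul_sub_two hL]
  field_simp
  ring

lemma phi_of_le {x : ℝ} (hxL : x ≤ L) : phi β L x = x ^ β := if_pos hxL

lemma mul_Gfun_of_le (hβ : 0 < β) {x : ℝ} (hx : 0 ≤ x) (hxL : x ≤ L) :
    x * Gfun β L x = β ^ 2 / (2 * β - 1) * (x ^ β) ^ 2 := by
  rw [Gfun, if_pos hxL, mul_left_comm, ← Real.rpow_two_mul_eq_sq hx]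
  congr 1
  conv_rhs => rw [show 2 * β = 1 + (2 * β - 1) by ring]
  rw [Real.rpow_add' hx (by linarith), Real.rpow_one]

lemma Hfun_of_le (hβ : 0 < β) {x : ℝ} (hx : 0 ≤ x) (hxL : x ≤ L) :
    Hfun β L x = β ^ 2 / (2 * β - 1) * (x ^ β) ^ 2 * (1 / (2 * β)) := by
  have hG : Set.EqOn (Gfun β L) (fun y => β ^ 2 / (2 * β - 1) * y ^ (2 * β - 1)) (Set.uIcc 0 x) :=
    fun y hy => if_pos ((Set.uIcc_of_le hx ▸ hy).2.trans hxL)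
  rw [Hfun, intervalIntegral.integral_congr hG, intervalIntegral.integral_const_mul,
    integral_rpow (Or.inl (by linarith)), sub_add_cancel, Real.zero_rpow (by positivity),
    Real.rpow_two_mul_eq_sq hx]
  ring

lemma phi_mul_one_add (hL : 0 < L) {s : ℝ} (hs : 0 ≤ s) :
    phi β L (L * (1 + s)) = L ^ β * (1 + β * s) := by
  rcases hs.eq_or_lt with rfl | hs
  · simp [phi]
  · rw [phi, if_neg (by nlinarith), Real.rpow_sub_one hL.ne']
    field_simp
    ring

lemma mul_Gfun_mul_one_add (hβ : 1 / 2 < β) (hL : 0 < L) {s : ℝ} (hs : 0 ≤ s) :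
    L * (1 + s) * Gfun β L (L * (1 + s)) =
      β ^ 2 / (2 * β - 1) * (L ^ β) ^ 2 * ((1 + s) * (1 + (2 * β - 1) * s)) := by
  rw [Gfun_of_ge hβ hL (by nlinarith)]
  field_simp
  ring

lemma Hfun_mul_one_add (hβ : 1 / 2 < β) (hL : 0 < L) {s : ℝ} (hs : 0 ≤ s) :
    Hfun β L (L * (1 + s)) =
      β ^ 2 / (2 * β - 1) * (L ^ β) ^ 2 * (1 / (2 * β) + s + (2 * β - 1) * s ^ 2 / 2) := by
  have hLx : L ≤ L * (1 + s) := by nlinarith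
  have hint := (continuous_Gfun hβ hL).intervalIntegrable (μ := MeasureTheory.volume)
  have hG : Set.EqOn (Gfun β L)
      (fun y => β ^ 2 / (2 * β - 1) * (L ^ β) ^ 2 / L ^ 2 * ((2 * β - 1) * y - 2 * (β - 1) * L))
      (Set.uIcc L (L * (1 + s))) :=
    fun y hy => Gfun_of_ge hβ hL (Set.uIcc_of_le hLx ▸ hy).1
  rw [Hfun, ← intervalIntegral.integral_add_adjacent_intervals (hint 0 L) (hint L _), ← Hfun,
    Hfun_of_le (by linarith) hL.le le_rfl, intervalIntegral.integral_congr hG,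
    intervalIntegral.integral_const_mul, intervalIntegral.integral_sub
      (intervalIntegral.intervalIntegrable_id.const_mul _) intervalIntegrable_const,
    intervalIntegral.integral_const_mul, integral_id, intervalIntegral.integral_const, smul_eq_mul]
  field_simp
  ring

lemma exists_phi_Gfun_Hfun_eq (hβ : 1 / 2 < β) (hL : 0 < L) {x : ℝ} (hx : 0 ≤ x) :
    ∃ A s : ℝ, 0 ≤ s ∧ phi β L x = A * (1 + β * s) ∧
      x * Gfun β L x = β ^ 2 / (2 * β - 1) * A ^ 2 * ((1 + s) * (1 + (2 * β - 1) * s)) ∧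
      Hfun β L x = β ^ 2 / (2 * β - 1) * A ^ 2 * (1 / (2 * β) + s + (2 * β - 1) * s ^ 2 / 2) := by
  rcases le_or_gt x L with hxL | hLx
  · have hβ0 : 0 < β := by linarith
    refine ⟨x ^ β, 0, le_rfl, ?_, ?_, ?_⟩
    · simp [phi_of_le hxL]
    · simp [mul_Gfun_of_le hβ0 hx hxL]
    · simp [Hfun_of_le hβ0 hx hxL]
  · obtain ⟨s, hs, rfl⟩ : ∃ s, 0 ≤ s ∧ x = L * (1 + s) :=
      ⟨x / L - 1, by rw [sub_nonneg, one_le_div hL]; exact hLx.le, by field_simp; ring⟩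
    exact ⟨L ^ β, s, hs, phi_mul_one_add hL hs, mul_Gfun_mul_one_add hβ hL hs,
      Hfun_mul_one_add hβ hL hs⟩

lemma sq_one_add_mul_le (hβ : 1 / 2 < β) {s : ℝ} (hs : 0 ≤ s) :
    (1 + β * s) ^ 2 ≤
      12 * β * (β ^ 2 / (2 * β - 1) * (1 / (2 * β) + s + (2 * β - 1) * s ^ 2 / 2)) := by
  have : β * 2 - 1 ≠ 0 := by linarith
  rw [show 12 * β * (β ^ 2 / (2 * β - 1) * (1 / (2 * β) + s + (2 * β - 1) * s ^ 2 / 2)) =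
      (6 * β ^ 2 + 12 * β ^ 3 * s + 6 * β ^ 3 * (2 * β - 1) * s ^ 2) / (2 * β - 1) by
    field_simp; ring, le_div_iff₀ (by linarith)]
  have hq : 0 ≤ 6 * β ^ 2 - 2 * β + 1 := by nlinarith [sq_nonneg (6 * β - 1)]
  have hlin : 0 ≤ 2 * β * (6 * β ^ 2 - 2 * β + 1) * s := by
    have : 0 ≤ β := by linarith
    positivity
  have hquad : 0 ≤ (2 * β - 1) * β ^ 2 * (6 * β - 1) * s ^ 2 := by
    have : 0 ≤ 2 * β - 1 := by linarith
    have : 0 ≤ 6 * β - 1 := by linarith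
    positivity
  linear_combination hq + hlin + hquad

lemma one_add_mul_one_add_mul_le (hβ : 0 < β) {s : ℝ} (hs : 0 ≤ s) :
    (1 + s) * (1 + (2 * β - 1) * s) ≤ 4 * β * (1 / (2 * β) + s + (2 * β - 1) * s ^ 2 / 2) := by
  rw [show 4 * β * (1 / (2 * β) + s + (2 * β - 1) * s ^ 2 / 2) =
      2 + 4 * β * s + 2 * β * (2 * β - 1) * s ^ 2 by field_simp; ring]
  nlinarith [mul_nonneg hβ.le hs, sq_nonneg ((2 * β - 1) * s)]

end

theorem stmt3 (β L : ℝ) (hβ : 1 ≤ β) (hL : 0 < L) (x : ℝ) (hx : 0 ≤ x) :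
    12 * β * Hfun β L x ≥ (phi β L x)^2 ∧
    4 * β * Hfun β L x ≥ x * Gfun β L x := by
  have hβ' : 1 / 2 < β := by linarith
  have hβ0 : 0 < β := by linarith
  obtain ⟨A, s, hs, hphi, hG, hH⟩ := exists_phi_Gfun_Hfun_eq hβ' hL hx
  have hc : 0 ≤ β ^ 2 / (2 * β - 1) * A ^ 2 := by
    have : 0 ≤ 2 * β - 1 := by linarith
    positivity
  rw [hphi, hG, hH]
  constructor
  · linear_combination mul_le_mul_of_nonneg_left (sq_one_add_mul_le hβ' hs) (sq_nonneg A)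
  · linear_combination mul_le_mul_of_nonneg_left (one_add_mul_one_add_mul_le hβ0 hs) hc
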